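/- Let k ≥ 2 be an integer and let ε be a real number with 0 ≤ ε ≤ 2/((k+1)(k+2)). Define f_{k,ε} : ℕ → [0,1] by f_{k,ε}(0) = 1, f_{k,ε}(1) = 1−ε, f_{k,ε}(d) = 2/(d+1) for 2 ≤ d ≤ k, and f_{k,ε}(d) = min{(k+1)ε, 2/(d+1)} for d ≥ k+1. Then f_{k,ε} is an extremal lower bound for α_{𝒞_k}: there is no function g : ℕ → [0,1] with g not identically 0 such that α_{𝒞_k}(G) ≥ ∑_{v ∈ V(G)} (f_{k,ε} + g)(d(v)) holds for every graph G. -/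

import Mathlib

/-- A graph is a forest of caterpillars if it is acyclic and the set of its
vertices of degree at least 2 induces a subgraph of maximum degree at most 2
(equivalently, every connected component is a caterpillar). -/
def IsCaterpillarForest {α : Type*} (H : SimpleGraph α) : Prop :=
  H.IsAcyclic ∧ ∀ v, 2 ≤ (H.neighborSet v).ncard →
    {w ∈ H.neighborSet v | 2 ≤ (H.neighborSet w).ncard}.ncard ≤ 2

/-- The lower-bound function f_{k,ε} for forests of caterpillars of maximum degree at most k. -/
noncomputable def fCk (k : ℕ) (ε : ℝ) (d : ℕ) : ℝ :=
  if d = 0 then 1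
  else if d = 1 then 1 - ε
  else if d ≤ k then 2 / ((d : ℝ) + 1)
  else min (((k : ℝ) + 1) * ε) (2 / ((d : ℝ) + 1))

open Finset

/-- The number of neighbors in an induced subgraph, as a finset count. -/
lemma induced_ncard {V : Type} [Fintype V] [DecidableEq V] (G : SimpleGraph V)
    [DecidableRel G.Adj] (S : Finset V) (v : V) (hv : v ∈ (S : Set V)) :
    ((G.induce (S : Set V)).neighborSet ⟨v, hv⟩).ncard
      = (S.filter (fun w => G.Adj v w)).card := by
  have h1 : (Subtype.val '' ((G.induce (S : Set V)).neighborSet ⟨v, hv⟩))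
      = ((S.filter (fun w => G.Adj v w)) : Set V) := by
    ext w
    constructor
    · rintro ⟨⟨w', hw'⟩, hadj, rfl⟩
      simp only [SimpleGraph.mem_neighborSet, SimpleGraph.comap_adj] at hadj
      simp only [Finset.coe_filter, Set.mem_setOf_eq]
      exact ⟨hw', hadj⟩
    · intro hw
      simp only [Finset.coe_filter, Set.mem_setOf_eq] at hw
      exact ⟨⟨w, hw.1⟩, hw.2, rfl⟩
  have h2 := Set.ncard_image_of_injective
    ((G.induce (S : Set V)).neighborSet ⟨v, hv⟩) Subtype.val_injective
  rw [h1] at h2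
  rw [← h2, Set.ncard_coe_finset]

/-- An acyclic induced subgraph of a complete graph has at most 2 vertices. -/
lemma clique_bound {n : ℕ} (S : Finset (Fin n))
    (h : ((⊤ : SimpleGraph (Fin n)).induce (S : Set (Fin n))).IsAcyclic) :
    S.card ≤ 2 := by
  by_contra hc
  push_neg at hc
  obtain ⟨a, ha⟩ := Finset.card_pos.mp (by omega : 0 < S.card)
  obtain ⟨b, hb⟩ := Finset.card_pos.mp
    (by rw [Finset.card_erase_of_mem ha]; omega : 0 < (S.erase a).card)
  obtain ⟨c, hcm⟩ := Finset.card_pos.mp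
    (by rw [Finset.card_erase_of_mem hb, Finset.card_erase_of_mem ha]; omega :
      0 < ((S.erase a).erase b).card)
  have hba : b ≠ a := (Finset.mem_erase.mp hb).1
  have hbS : b ∈ S := (Finset.mem_erase.mp hb).2
  have hcb : c ≠ b := (Finset.mem_erase.mp hcm).1
  have hca : c ≠ a := (Finset.mem_erase.mp (Finset.mem_erase.mp hcm).2).1
  have hcS : c ∈ S := (Finset.mem_erase.mp (Finset.mem_erase.mp hcm).2).2
  set H := (⊤ : SimpleGraph (Fin n)).induce (S : Set (Fin n)) with hH
  have haS' : a ∈ (S : Set (Fin n)) := ha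
  have hbS' : b ∈ (S : Set (Fin n)) := hbS
  have hcS' : c ∈ (S : Set (Fin n)) := hcS
  set A : (S : Set (Fin n)) := ⟨a, haS'⟩
  set B : (S : Set (Fin n)) := ⟨b, hbS'⟩
  set C : (S : Set (Fin n)) := ⟨c, hcS'⟩
  have hAB : H.Adj A B := by
    simp only [hH, SimpleGraph.comap_adj, SimpleGraph.top_adj, A, B]
    exact fun he => hba he.symm
  have hAC : H.Adj A C := by
    simp only [hH, SimpleGraph.comap_adj, SimpleGraph.top_adj, A, C]
    exact fun he => hca he.symm
  have hCB : H.Adj C B := by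
    simp only [hH, SimpleGraph.comap_adj, SimpleGraph.top_adj, C, B]
    exact fun he => hcb he
  have hAneB : A ≠ B := by
    intro he; exact hba (congrArg Subtype.val he).symm
  have hAneC : A ≠ C := by
    intro he; exact hca (congrArg Subtype.val he).symm
  have hCneB : C ≠ B := by
    intro he; exact hcb (congrArg Subtype.val he)
  have hpath2 : (SimpleGraph.Walk.cons hAC
      (SimpleGraph.Walk.cons hCB SimpleGraph.Walk.nil)).IsPath := by
    rw [SimpleGraph.Walk.cons_isPath_iff]
    constructor
    · rw [SimpleGraph.Walk.cons_isPath_iff]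
      refine ⟨SimpleGraph.Walk.IsPath.nil, ?_⟩
      simp [hCneB]
    · simp [hAneC, hAneB]
  have huniq := SimpleGraph.isAcyclic_iff_path_unique.mp h
    (SimpleGraph.Path.singleton hAB) ⟨_, hpath2⟩
  have hlen := congrArg (fun p : H.Path A B => p.1.length) huniq
  simp [SimpleGraph.Path.singleton] at hlen

/-- The pendant-clique graph: a clique on `Fin m` where each clique vertex `(i, 0)`
has `k+1` pendant leaves `(i, j)` for `j ≠ 0`. -/
def PG (m k : ℕ) : SimpleGraph (Fin m × Fin (k + 2)) where
  Adj a b := a ≠ b ∧ ((a.2 = 0 ∧ b.2 = 0) ∨ (a.2 = 0 ∧ a.1 = b.1) ∨ (b.2 = 0 ∧ a.1 = b.1))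
  symm := by
    constructor
    rintro a b ⟨hne, h⟩
    refine ⟨hne.symm, ?_⟩
    rcases h with ⟨h1, h2⟩ | ⟨h1, h2⟩ | ⟨h1, h2⟩
    · exact Or.inl ⟨h2, h1⟩
    · exact Or.inr (Or.inr ⟨h1, h2.symm⟩)
    · exact Or.inr (Or.inl ⟨h1, h2.symm⟩)
  loopless := by constructor; rintro a ⟨hne, _⟩; exact hne rfl

instance PG.adjDecidable (m k : ℕ) : DecidableRel (PG m k).Adj := fun a b =>
  inferInstanceAs (Decidable (_ ∧ _))

lemma PG_adj {m k : ℕ} (a b : Fin m × Fin (k + 2)) :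
    (PG m k).Adj a b ↔ a ≠ b ∧
      ((a.2 = 0 ∧ b.2 = 0) ∨ (a.2 = 0 ∧ a.1 = b.1) ∨ (b.2 = 0 ∧ a.1 = b.1)) := Iff.rfl

lemma PG_degree_center {m k : ℕ} (hm : 1 ≤ m) (i : Fin m) :
    (PG m k).degree (i, (0 : Fin (k + 2))) = m + k := by
  have hnb : (PG m k).neighborFinset (i, (0 : Fin (k + 2)))
      = ((univ.erase i) ×ˢ ({(0 : Fin (k + 2))} : Finset (Fin (k + 2))))
        ∪ (({i} : Finset (Fin m)) ×ˢ (univ.erase (0 : Fin (k + 2)))) := by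
    ext ⟨x, y⟩
    rw [SimpleGraph.mem_neighborFinset, PG_adj, Finset.mem_union, Finset.mem_product,
      Finset.mem_product, Finset.mem_erase, Finset.mem_singleton, Finset.mem_singleton,
      Finset.mem_erase]
    constructor
    · rintro ⟨hne, h⟩
      rcases h with ⟨-, h2⟩ | ⟨-, h2⟩ | ⟨h2, h3⟩
      · by_cases hx : x = i
        · exact absurd (Prod.ext_iff.mpr ⟨hx.symm, h2.symm⟩) hne
        · exact Or.inl ⟨⟨hx, Finset.mem_univ x⟩, h2⟩
      · by_cases hy : y = 0
        · exact absurd (Prod.ext_iff.mpr ⟨h2, hy.symm⟩) hne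
        · exact Or.inr ⟨h2.symm, hy, Finset.mem_univ y⟩
      · exact absurd (Prod.ext_iff.mpr ⟨h3, h2.symm⟩) hne
    · rintro (⟨⟨hxi, -⟩, h2⟩ | ⟨hx, hy, -⟩)
      · exact ⟨fun h => hxi (congrArg Prod.fst h).symm, Or.inl ⟨rfl, h2⟩⟩
      · exact ⟨fun h => hy (congrArg Prod.snd h).symm, Or.inr (Or.inl ⟨rfl, hx.symm⟩)⟩
  rw [SimpleGraph.degree, hnb, Finset.card_union_of_disjoint, Finset.card_product,
    Finset.card_product]
  · simp only [Finset.card_erase_of_mem (Finset.mem_univ _), Finset.card_singleton,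
      Finset.card_univ, Fintype.card_fin]
    omega
  · rw [Finset.disjoint_left]
    rintro ⟨x, y⟩ hx hy
    simp only [Finset.mem_product, Finset.mem_singleton, Finset.mem_erase] at hx hy
    exact hy.2.1 hx.2

lemma PG_degree_pendant {m k : ℕ} (i : Fin m) (j : Fin (k + 2)) (hj : j ≠ 0) :
    (PG m k).degree (i, j) = 1 := by
  have hnb : (PG m k).neighborFinset (i, j) = {(i, (0 : Fin (k + 2)))} := by
    ext ⟨x, y⟩
    rw [SimpleGraph.mem_neighborFinset, PG_adj]
    simp only [Finset.mem_singleton, ne_eq, Prod.mk.injEq, not_and]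
    constructor
    · rintro ⟨hne, h⟩
      rcases h with ⟨h1, h2⟩ | ⟨h1, h2⟩ | ⟨h1, h2⟩
      · exact absurd h1 hj
      · exact absurd h1 hj
      · exact ⟨h2.symm, h1⟩
    · rintro ⟨rfl, rfl⟩
      exact ⟨fun _ hj0 => hj hj0, Or.inr (Or.inr ⟨rfl, rfl⟩)⟩
  rw [SimpleGraph.degree, hnb, Finset.card_singleton]

lemma PG_sum {m k : ℕ} (hm : 1 ≤ m) (F : ℕ → ℝ) :
    ∑ v : Fin m × Fin (k + 2), F ((PG m k).degree v)
      = m * F (m + k) + (m * (k + 1)) * F 1 := by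
  rw [Fintype.sum_prod_type]
  have hrow : ∀ i : Fin m, ∑ j : Fin (k + 2), F ((PG m k).degree (i, j))
      = F (m + k) + (k + 1) * F 1 := by
    intro i
    rw [Fin.sum_univ_succ]
    rw [PG_degree_center hm i]
    congr 1
    have : ∀ j : Fin (k + 1), F ((PG m k).degree (i, j.succ)) = F 1 := by
      intro j
      rw [PG_degree_pendant i j.succ (Fin.succ_ne_zero j)]
    rw [Finset.sum_congr rfl (fun j _ => this j), Finset.sum_const, Finset.card_univ,
      Fintype.card_fin, nsmul_eq_mul]
    push_cast
    ring
  rw [Finset.sum_congr rfl (fun i _ => hrow i), Finset.sum_const, Finset.card_univ,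
    Fintype.card_fin, nsmul_eq_mul]
  push_cast
  ring

lemma fCk_zero (k : ℕ) (ε : ℝ) : fCk k ε 0 = 1 := by simp [fCk]

lemma fCk_one (k : ℕ) (ε : ℝ) : fCk k ε 1 = 1 - ε := by simp [fCk]

lemma fCk_mid (k : ℕ) (ε : ℝ) (d : ℕ) (h2 : 2 ≤ d) (hdk : d ≤ k) :
    fCk k ε d = 2 / ((d : ℝ) + 1) := by
  have h0 : d ≠ 0 := by omega
  have h1 : d ≠ 1 := by omega
  simp [fCk, h0, h1, hdk]

lemma fCk_high (k : ℕ) (ε : ℝ) (d : ℕ) (hk : 2 ≤ k) (h : k < d) :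
    fCk k ε d = min (((k : ℝ) + 1) * ε) (2 / ((d : ℝ) + 1)) := by
  have h0 : d ≠ 0 := by omega
  have h1 : d ≠ 1 := by omega
  have h2 : ¬ d ≤ k := by omega
  simp [fCk, h0, h1, h2]

/-- For k ≥ 2 and 0 ≤ ε ≤ 2/((k+1)(k+2)), the lower bound f_{k,ε} for induced forests of
caterpillars of maximum degree at most k is extremal: no nonzero g : ℕ → [0,1] can be
added to f_{k,ε} while keeping a valid lower bound. -/
theorem stmt10 (k : ℕ) (hk : 2 ≤ k) (ε : ℝ) (hε0 : 0 ≤ ε)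
    (hε1 : ε ≤ 2 / (((k : ℝ) + 1) * ((k : ℝ) + 2))) :
    ¬ ∃ g : ℕ → ℝ, (∀ d, 0 ≤ g d ∧ g d ≤ 1) ∧ (∃ d, g d ≠ 0) ∧
      (∀ (V : Type) [Fintype V] [DecidableEq V] (G : SimpleGraph V) [DecidableRel G.Adj],
        ∃ S : Finset V, IsCaterpillarForest (G.induce (S : Set V)) ∧
          (∀ v, ((G.induce (S : Set V)).neighborSet v).ncard ≤ k) ∧
          ∑ v, (fCk k ε (G.degree v) + g (G.degree v)) ≤ (S.card : ℝ)) := by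
  rintro ⟨g, hg01, ⟨d₀, hd₀⟩, H⟩
  have hgpos : 0 < g d₀ := lt_of_le_of_ne (hg01 d₀).1 (Ne.symm hd₀)
  -- the pendant-clique graphs give: m * g (m+k) + m*(k+1) * g 1 ≤ 0
  have pendant : ∀ m : ℕ, 1 ≤ m → ((k : ℝ) + 1) * ε ≤ 2 / ((m : ℝ) + (k : ℝ) + 1) →
      (m : ℝ) * g (m + k) + ((m : ℝ) * ((k : ℝ) + 1)) * g 1 ≤ 0 := by
    intro m hm hmε
    obtain ⟨S, hcf, hdeg, hsum⟩ := H (Fin m × Fin (k + 2)) (PG m k)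
    -- compute the sum
    have hfmk : fCk k ε (m + k) = ((k : ℝ) + 1) * ε := by
      rw [fCk_high k ε (m + k) hk (by omega)]
      rw [min_eq_left]
      convert hmε using 3
      · rfl
      push_cast
      ring
    have hsum2 : ∑ v : Fin m × Fin (k + 2),
        (fCk k ε ((PG m k).degree v) + g ((PG m k).degree v))
        = (m : ℝ) * ((k : ℝ) + 1) + ((m : ℝ) * g (m + k) + ((m : ℝ) * ((k : ℝ) + 1)) * g 1) := by
      rw [PG_sum hm (fun d => fCk k ε d + g d), hfmk, fCk_one]
      ring
    -- bound the size of S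
    have hS : (S.card : ℝ) ≤ (m : ℝ) * ((k : ℝ) + 1) := by
      have hcard : S.card ≤ m * (k + 1) := by
        have hfib : S.card = ∑ i : Fin m, (S.filter (fun v => v.1 = i)).card :=
          Finset.card_eq_sum_card_fiberwise (fun x _ => Finset.mem_univ x.1)
        have hbound : ∀ i : Fin m, (S.filter (fun v => v.1 = i)).card ≤ k + 1 := by
          intro i
          by_contra hcon
          push_neg at hcon
          -- then the whole column is in S
          have hsub : S.filter (fun v => v.1 = i)
              ⊆ ({i} : Finset (Fin m)) ×ˢ (univ : Finset (Fin (k + 2))) := by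
            intro v hv
            simp only [Finset.mem_filter] at hv
            simp only [Finset.mem_product, Finset.mem_singleton, Finset.mem_univ, and_true]
            exact hv.2
          have hcardcol : (({i} : Finset (Fin m)) ×ˢ (univ : Finset (Fin (k + 2)))).card
              = k + 2 := by
            rw [Finset.card_product]
            simp
          have heq : S.filter (fun v => v.1 = i)
              = ({i} : Finset (Fin m)) ×ˢ (univ : Finset (Fin (k + 2))) :=
            Finset.eq_of_subset_of_card_le hsub (by omega)
          have hall : ∀ j : Fin (k + 2), (i, j) ∈ S := by
            intro j
            have : (i, j) ∈ S.filter (fun v => v.1 = i) := by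
              rw [heq]
              simp
            exact (Finset.mem_filter.mp this).1
          have hi0 : (i, (0 : Fin (k + 2))) ∈ ((S : Set (Fin m × Fin (k + 2)))) := hall 0
          have hd := hdeg ⟨(i, 0), hi0⟩
          rw [induced_ncard (PG m k) S (i, 0) hi0] at hd
          -- but all k+1 pendants are neighbors in S
          have hsub2 : ({i} : Finset (Fin m)) ×ˢ (univ.erase (0 : Fin (k + 2)))
              ⊆ S.filter (fun w => (PG m k).Adj (i, 0) w) := by
            rintro ⟨x, y⟩ hxy
            simp only [Finset.mem_product, Finset.mem_singleton, Finset.mem_erase,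
              Finset.mem_univ, and_true] at hxy
            obtain ⟨rfl, hy⟩ := hxy
            refine Finset.mem_filter.mpr ⟨hall y, ?_⟩
            exact ⟨fun he => hy (congrArg Prod.snd he).symm, Or.inr (Or.inl ⟨rfl, rfl⟩)⟩
          have hcard2 : k + 1 ≤ (S.filter (fun w => (PG m k).Adj (i, 0) w)).card := by
            have := Finset.card_le_card hsub2
            rw [Finset.card_product] at this
            simpa using this
          omega
        calc S.card = ∑ i : Fin m, (S.filter (fun v => v.1 = i)).card := hfib
          _ ≤ ∑ _i : Fin m, (k + 1) := Finset.sum_le_sum (fun i _ => hbound i)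
          _ = m * (k + 1) := by simp [Finset.sum_const, mul_comm]
      calc (S.card : ℝ) ≤ ((m * (k + 1) : ℕ) : ℝ) := by exact_mod_cast hcard
        _ = (m : ℝ) * ((k : ℝ) + 1) := by push_cast; ring
    rw [hsum2] at hsum
    linarith [le_trans hsum hS]
  -- from m = 1 : g 1 = 0 (and g (k+1) = 0)
  have hkε : ((k : ℝ) + 1) * ε ≤ 2 / ((1 : ℝ) + (k : ℝ) + 1) := by
    have hk1 : (0 : ℝ) < (k : ℝ) + 1 := by positivity
    have hk2 : (0 : ℝ) < (k : ℝ) + 2 := by positivity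
    rw [show (1 : ℝ) + (k : ℝ) + 1 = (k : ℝ) + 2 by ring, le_div_iff₀ hk2]
    calc ((k : ℝ) + 1) * ε * ((k : ℝ) + 2)
        ≤ ((k : ℝ) + 1) * (2 / (((k : ℝ) + 1) * ((k : ℝ) + 2))) * ((k : ℝ) + 2) := by
          have := mul_le_mul_of_nonneg_left hε1 (le_of_lt hk1)
          nlinarith
      _ = 2 := by field_simp
  have hg1 : g 1 = 0 := by
    have h1 := pendant 1 le_rfl (by push_cast at hkε ⊢; linarith)
    push_cast at h1
    have hgk1 : 0 ≤ g (1 + k) := (hg01 (1 + k)).1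
    have hg1' : 0 ≤ g 1 := (hg01 1).1
    have hk1 : (0 : ℝ) < (k : ℝ) + 1 := by positivity
    have hge : g 1 ≤ ((k : ℝ) + 1) * g 1 := le_mul_of_one_le_left hg1' (by linarith)
    linarith
  -- the clique graphs : if fCk d₀ = 2/(d₀+1) then contradiction
  have clique : ∀ d : ℕ, 2 ≤ d → fCk k ε d = 2 / ((d : ℝ) + 1) → g d ≤ 0 := by
    intro d hd2 hfd
    obtain ⟨S, hcf, hdeg, hsum⟩ := H (Fin (d + 1)) ⊤
    have hScard : S.card ≤ 2 := clique_bound S hcf.1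
    have hdeg' : ∀ v : Fin (d + 1), (⊤ : SimpleGraph (Fin (d + 1))).degree v = d := by
      intro v
      rw [SimpleGraph.complete_graph_degree]
      simp
    have hsum2 : ∑ v : Fin (d + 1),
        (fCk k ε ((⊤ : SimpleGraph (Fin (d + 1))).degree v)
          + g ((⊤ : SimpleGraph (Fin (d + 1))).degree v))
        = 2 + ((d : ℝ) + 1) * g d := by
      rw [Finset.sum_congr rfl (fun v _ => by rw [hdeg' v]), Finset.sum_const,
        Finset.card_univ, Fintype.card_fin, nsmul_eq_mul, hfd]
      have hd1 : (d : ℝ) + 1 ≠ 0 := by positivity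
      push_cast
      field_simp
    rw [hsum2] at hsum
    have : (S.card : ℝ) ≤ 2 := by exact_mod_cast hScard
    have hd1 : (0 : ℝ) < (d : ℝ) + 1 := by positivity
    nlinarith
  -- case analysis on d₀
  rcases Nat.eq_zero_or_pos d₀ with h0 | h0
  · -- d₀ = 0 : single vertex graph
    subst h0
    obtain ⟨S, hcf, hdeg, hsum⟩ := H (Fin 1) ⊥
    have hsum2 : ∑ v : Fin 1, (fCk k ε ((⊥ : SimpleGraph (Fin 1)).degree v)
        + g ((⊥ : SimpleGraph (Fin 1)).degree v)) = 1 + g 0 := by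
      rw [Fin.sum_univ_one, SimpleGraph.bot_degree, fCk_zero]
    have hScard : S.card ≤ 1 := le_trans (Finset.card_le_univ S) (by simp)
    rw [hsum2] at hsum
    have : (S.card : ℝ) ≤ 1 := by exact_mod_cast hScard
    linarith
  rcases Nat.lt_or_ge d₀ 2 with h1 | h2
  · -- d₀ = 1
    have : d₀ = 1 := by omega
    subst this
    exact absurd hg1 hd₀
  rcases le_or_gt d₀ k with hdk | hdk
  · -- 2 ≤ d₀ ≤ k : clique
    exact absurd (clique d₀ h2 (fCk_mid k ε d₀ h2 hdk)) (not_le.mpr hgpos)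
  · -- d₀ ≥ k + 1
    rcases le_total (((k : ℝ) + 1) * ε) (2 / ((d₀ : ℝ) + 1)) with hcase | hcase
    · -- pendant graph with m = d₀ - k
      have hm : 1 ≤ d₀ - k := by omega
      have hmk : d₀ - k + k = d₀ := by omega
      have hp := pendant (d₀ - k) hm (by
        rw [show ((d₀ - k : ℕ) : ℝ) + (k : ℝ) + 1 = ((d₀ : ℕ) : ℝ) + 1 by
          push_cast [Nat.cast_sub (le_of_lt hdk)]; ring]
        exact hcase)
      rw [hmk, hg1] at hp
      have hmpos : (0 : ℝ) < ((d₀ - k : ℕ) : ℝ) := by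
        exact_mod_cast Nat.lt_of_lt_of_le Nat.zero_lt_one hm
      nlinarith [mul_pos hmpos hgpos]
    · -- clique
      have hfd : fCk k ε d₀ = 2 / ((d₀ : ℝ) + 1) := by
        rw [fCk_high k ε d₀ hk hdk, min_eq_right hcase]
      exact absurd (clique d₀ h2 hfd) (not_le.mpr hgpos)
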